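/- arXiv:1508.06865 — 2 statements merged into one kernel-verified Lean document; each statement's English description precedes it below -/
import Mathlib

section
/- If a scenario f : ℝ → S is past-affine-invariant on (-∞, x), i.e., there exists a non-identity strictly increasing affine map t(y) = ay + b with a > 0 such that f agrees with f ∘ t on (-∞, x), then there exists a scenario g : ℝ → S that is affine-invariant (g = g ∘ t' for some non-identity strictly increasing affine t') and agrees with f on (-∞, x). -/
/-!
If `t` maps the half-line `(-∞, x)` into itself, then `f` is constant along `t`-orbits as long
as they stay in the half-line, and orbits never leave it once they enter. So `f` extends to a
`t`-invariant function by evaluating it at any point of the orbit lying in the half-line (and at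
a fixed value on orbits that never enter). An increasing affine map `t` maps `(-∞, x)` into
itself or its inverse does, and invariance under `t` is the same as invariance under `t⁻¹`.
-/

open Set Function

section OrbitExtension

variable {α β : Type*} {d : α → α} {s : Set α} {f : α → β}

theorem apply_iterate_eq_of_mapsTo (hd : MapsTo d s s) (hf : ∀ y ∈ s, f (d y) = f y)
    {y : α} (hy : y ∈ s) (n : ℕ) : f (d^[n] y) = f y := by
  induction n with
  | zero => rfl
  | succ n ih =>
    rw [iterate_succ_apply', hf _ (hd.iterate n hy), ih]

theorem apply_iterate_eq_apply_iterate (hd : MapsTo d s s) (hf : ∀ y ∈ s, f (d y) = f y)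
    {y : α} {m n : ℕ} (hm : d^[m] y ∈ s) (hn : d^[n] y ∈ s) : f (d^[m] y) = f (d^[n] y) := by
  wlog hmn : m ≤ n generalizing m n
  · exact (this hn hm (le_of_not_ge hmn)).symm
  obtain ⟨k, rfl⟩ := Nat.exists_eq_add_of_le hmn
  rw [add_comm, iterate_add_apply, apply_iterate_eq_of_mapsTo hd hf hm]

open Classical in
variable (d s f) in
noncomputable def orbitExtension (c : β) (y : α) : β :=
  if h : ∃ n, d^[n] y ∈ s then f (d^[h.choose] y) else c

theorem orbitExtension_eq (hd : MapsTo d s s) (hf : ∀ y ∈ s, f (d y) = f y) (c : β)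
    {y : α} {n : ℕ} (hn : d^[n] y ∈ s) : orbitExtension d s f c y = f (d^[n] y) := by
  have h : ∃ n, d^[n] y ∈ s := ⟨n, hn⟩
  rw [orbitExtension, dif_pos h]
  exact apply_iterate_eq_apply_iterate hd hf h.choose_spec hn

theorem eqOn_orbitExtension (hd : MapsTo d s s) (hf : ∀ y ∈ s, f (d y) = f y) (c : β) :
    EqOn (orbitExtension d s f c) f s := fun _ hy =>
  orbitExtension_eq (n := 0) hd hf c hy

theorem orbitExtension_apply_self (hd : MapsTo d s s) (hf : ∀ y ∈ s, f (d y) = f y) (c : β)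
    (y : α) : orbitExtension d s f c (d y) = orbitExtension d s f c y := by
  by_cases h : ∃ n, d^[n] y ∈ s
  · obtain ⟨n, hn⟩ := h
    have hn' : d^[n] (d y) ∈ s := by
      rw [← iterate_succ_apply, iterate_succ_apply']
      exact hd hn
    rw [orbitExtension_eq hd hf c hn', orbitExtension_eq hd hf c hn, ← iterate_succ_apply,
      iterate_succ_apply', hf _ hn]
  · have h' : ¬ ∃ n, d^[n] (d y) ∈ s := fun ⟨n, hn⟩ => h ⟨n + 1, hn⟩
    rw [orbitExtension, orbitExtension, dif_neg h, dif_neg h']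

end OrbitExtension

theorem mapsTo_Iio_affine {a b x : ℝ} (ha : 0 < a) (h : a * x + b ≤ x) :
    MapsTo (fun y => a * y + b) (Iio x) (Iio x) := fun y (hy : y < x) => by
  have : a * y < a * x := mul_lt_mul_of_pos_left hy ha
  show a * y + b < x
  linarith

theorem past_affine_invariant_extension {S : Type*} (f : ℝ → S) (x a b : ℝ)
    (ha : 0 < a) (hnid : ¬ ∀ y : ℝ, a * y + b = y)
    (hpai : ∀ y < x, f y = f (a * y + b)) :
    ∃ (g : ℝ → S) (a' b' : ℝ), 0 < a' ∧ (¬ ∀ y : ℝ, a' * y + b' = y) ∧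
      (∀ y, g y = g (a' * y + b')) ∧ ∀ y < x, g y = f y := by
  rcases le_or_gt (a * x + b) x with hle | hlt
  · have hd := mapsTo_Iio_affine ha hle
    have hf : ∀ y ∈ Iio x, f (a * y + b) = f y := fun y hy => (hpai y hy).symm
    exact ⟨orbitExtension _ _ f (f x), a, b, ha, hnid,
      fun y => (orbitExtension_apply_self hd hf _ y).symm, eqOn_orbitExtension hd hf _⟩
  · have hright : ∀ y, a * (a⁻¹ * y + -(a⁻¹ * b)) + b = y := fun y => by field_simp; ring
    have hleft : ∀ y, a⁻¹ * (a * y + b) + -(a⁻¹ * b) = y := fun y => by field_simp; ring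
    have hd : MapsTo (fun y => a⁻¹ * y + -(a⁻¹ * b)) (Iio x) (Iio x) := by
      refine mapsTo_Iio_affine (inv_pos.2 ha) ?_
      have : a⁻¹ * x + -(a⁻¹ * b) - x = a⁻¹ * (x - (a * x + b)) := by field_simp; ring
      linarith [mul_neg_of_pos_of_neg (inv_pos.2 ha) (sub_neg.2 hlt)]
    have hf : ∀ y ∈ Iio x, f (a⁻¹ * y + -(a⁻¹ * b)) = f y := fun y hy => by
      rw [hpai _ (hd hy), hright]
    refine ⟨orbitExtension _ _ f (f x), a⁻¹, -(a⁻¹ * b), inv_pos.2 ha,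
      fun hid => hnid fun y => ?_, fun y => (orbitExtension_apply_self hd hf _ y).symm,
      eqOn_orbitExtension hd hf _⟩
    rw [← hid (a * y + b), hleft]
end

section
/- There exists a predictor P : (ℝ → S) → (ℝ → S) such that for every scenario f : ℝ → S, the set {x ∈ ℝ : P(f)(x) ≠ f(x)} is countable. -/
/-!
Well-order all functions `ℝ → S` and, at `x`, guess the value at `x` of the least function that
agrees with `f` on `(-∞, x)`. If `a < b` and the guess at `a` is wrong, the least function used at
`b` also agrees with `f` on `(-∞, a)`, but differs from the one used at `a` at the point `a`; so it
is strictly larger. Along the set of wrong guesses the chosen functions therefore strictly increase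
in a well-order, which makes that set well-ordered by `<`, and a well-ordered set of reals is
countable: the open intervals between consecutive points are pairwise disjoint.
-/

open Set

theorem Set.IsWF.countable {α : Type*} [LinearOrder α] [TopologicalSpace α] [OrderTopology α]
    [SecondCountableTopology α] {s : Set α} (hs : s.IsWF) : s.Countable := by
  classical
  set t := {x ∈ s | (s ∩ Ioi x).Nonempty}
  let next (x : α) : α := if h : (s ∩ Ioi x).Nonempty then (hs.mono inter_subset_left).min h else x
  have lt_next : ∀ x ∈ t, x < next x := fun x hx ↦ by
    simpa [next, dif_pos hx.2] using ((hs.mono inter_subset_left).min_mem hx.2).2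
  have next_le : ∀ x ∈ t, ∀ y ∈ s, x < y → next x ≤ y := fun x hx y hy hxy ↦ by
    simpa [next, dif_pos hx.2] using (hs.mono inter_subset_left).min_le hx.2 ⟨hy, hxy⟩
  have disjoint_of_lt : ∀ a ∈ t, ∀ b ∈ t, a < b → Disjoint (Ioo a (next a)) (Ioo b (next b)) :=
    fun a ha b hb hab ↦ (Ioc_disjoint_Ioc_of_le (next_le a ha b hb.1 hab)).mono
      Ioo_subset_Ioc_self Ioo_subset_Ioc_self
  have ht : t.Countable := by
    refine PairwiseDisjoint.countable_of_Ioo (fun a ha b hb hab ↦ ?_) lt_next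
    rcases hab.lt_or_gt with h | h
    · exact disjoint_of_lt a ha b hb h
    · exact (disjoint_of_lt b hb a ha h).symm
  have hmax : (s \ t).Subsingleton := by
    rintro a ⟨ha, ha'⟩ b ⟨hb, hb'⟩
    by_contra hne
    rcases Ne.lt_or_gt hne with h | h
    · exact ha' ⟨ha, b, hb, h⟩
    · exact hb' ⟨hb, a, ha, h⟩
  exact hmax.countable.of_sdiff ht

namespace HardinTaylor

variable {X S : Type*} [Preorder X] (r : (X → S) → (X → S) → Prop) [IsWellOrder (X → S) r]

def agreeingBelow (f : X → S) (x : X) : Set (X → S) :=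
  {g | EqOn g f (Iio x)}

theorem agreeingBelow_congr {f g : X → S} {x : X} (h : EqOn f g (Iio x)) :
    agreeingBelow f x = agreeingBelow g x :=
  ext fun _ ↦ ⟨fun hk ↦ hk.trans h, fun hk ↦ hk.trans h.symm⟩

noncomputable def leastAgreeing (f : X → S) (x : X) : X → S :=
  (IsWellFounded.wf : WellFounded r).min (agreeingBelow f x) ⟨f, eqOn_refl f _⟩

noncomputable def predictor (f : X → S) (x : X) : S :=
  leastAgreeing r f x x

variable {r}

theorem leastAgreeing_mem (f : X → S) (x : X) : leastAgreeing r f x ∈ agreeingBelow f x :=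
  (IsWellFounded.wf : WellFounded r).min_mem _ _

theorem not_rel_leastAgreeing {f g : X → S} {x : X} (hg : g ∈ agreeingBelow f x) :
    ¬ r g (leastAgreeing r f x) :=
  (IsWellFounded.wf : WellFounded r).not_lt_min _ hg

theorem leastAgreeing_congr {f g : X → S} {x : X} (h : EqOn f g (Iio x)) :
    leastAgreeing r f x = leastAgreeing r g x := by
  unfold leastAgreeing
  congr 1
  exact agreeingBelow_congr h

theorem predictor_congr {f g : X → S} {x : X} (h : EqOn f g (Iio x)) :
    predictor r f x = predictor r g x :=
  congrFun (leastAgreeing_congr h) x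

theorem rel_leastAgreeing_of_predictor_ne {f : X → S} {a b : X} (ha : predictor r f a ≠ f a)
    (hab : a < b) : r (leastAgreeing r f a) (leastAgreeing r f b) := by
  have hmem : leastAgreeing r f b ∈ agreeingBelow f a :=
    (leastAgreeing_mem f b).mono (Iio_subset_Iio hab.le)
  have hne : leastAgreeing r f a ≠ leastAgreeing r f b := fun h ↦
    ha (by rw [predictor, h]; exact leastAgreeing_mem f b hab)
  exact (trichotomous_of r _ _).resolve_right
    (not_or_intro hne (not_rel_leastAgreeing hmem))

theorem isWF_setOf_predictor_ne (f : X → S) : {x | predictor r f x ≠ f x}.IsWF :=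
  (InvImage.wf (leastAgreeing r f) (IsWellFounded.wf : WellFounded r)).wellFoundedOn.mono'
    fun _ ha _ _ hab ↦ rel_leastAgreeing_of_predictor_ne ha hab

end HardinTaylor

theorem hardin_taylor_general {S : Type*} :
    ∃ P : (ℝ → S) → (ℝ → S),
      (∀ (f g : ℝ → S) (x : ℝ), (∀ y < x, f y = g y) → P f x = P g x) ∧
      ∀ f : ℝ → S, {x : ℝ | P f x ≠ f x}.Countable :=
  ⟨HardinTaylor.predictor WellOrderingRel, fun _ _ _ h ↦ HardinTaylor.predictor_congr h,
    fun f ↦ (HardinTaylor.isWF_setOf_predictor_ne f).countable⟩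

theorem hardin_taylor {S : Type*} [Nonempty S] :
    ∃ P : (ℝ → S) → (ℝ → S),
      (∀ (f g : ℝ → S) (x : ℝ), (∀ y < x, f y = g y) → P f x = P g x) ∧
      ∀ f : ℝ → S, {x : ℝ | P f x ≠ f x}.Countable :=
  hardin_taylor_general
end
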